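/- Let D ≥ 1, and for each pair of bits b, g ∈ F₂ let ρ_b^g be a density matrix on ℂ^D and P̃_b^g a D×D complex matrix, satisfying for all a, b ∈ F₂: P̃_b^0 + P̃_b^1 = 1, P̃_b^a ρ_{b̄}^0 P̃_b^a = P̃_b^a ρ_{b̄}^1 P̃_b^a, and P̃_b^a ρ_{b̄}^0 P̃_b^{ā} = − P̃_b^a ρ_{b̄}^1 P̃_b^{ā} (where x̄ = 1 ⊕ x). Let 0 ≤ m, r with r + m ≤ n, let K be an m×n and F an r×n binary matrix whose stacked rows G = (K; F) are linearly independent over F₂, and let d_w be the minimal Hamming weight of a vector vG with v ∈ F₂^{m+r} having a nonzero entry among its first m coordinates. Fix b ∈ F₂ⁿ and, for κ ∈ F₂^m, s ∈ F₂^r, set C_{κ,s} = {g : Fg = s, Kg = κ} and ρ_{κ,s} = |C_{κ,s}|⁻¹ Σ_{g ∈ C_{κ,s}} ⊗_{k=1}^n ρ_{b̄[k]}^{g[k]}. Then for all κ, κ′ ∈ F₂^m, all s ∈ F₂^r, and all k, l ∈ F₂ⁿ with d(k, l) < d_w: (⊗_{i=1}^n P̃_{b[i]}^{k[i]}) ·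 (ρ_{κ,s} − ρ_{κ′,s}) · (⊗_{i=1}^n P̃_{b[i]}^{l[i]}) = 0. -/

import Mathlib

open Matrix
open scoped ComplexOrder Classical

/-- The `n`-fold Kronecker/tensor product `⊗_{i=1}^n M_i`, as a matrix acting on
`(ℂ^D)^{⊗n}` (indexed by functions `Fin n → Fin D`). -/
noncomputable def tpow {D n : ℕ} (M : Fin n → Matrix (Fin D) (Fin D) ℂ) :
    Matrix (Fin n → Fin D) (Fin n → Fin D) ℂ :=
  Matrix.of fun x y => ∏ i, M i (x i) (y i)

/-- `C_{κ,s} = {g ∈ F₂ⁿ : Fg = s, Kg = κ}`. -/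
noncomputable def Cset {m r n : ℕ} (K : Matrix (Fin m) (Fin n) (ZMod 2))
    (F : Matrix (Fin r) (Fin n) (ZMod 2)) (κ : Fin m → ZMod 2) (s : Fin r → ZMod 2) :
    Finset (Fin n → ZMod 2) :=
  Finset.univ.filter fun g => F *ᵥ g = s ∧ K *ᵥ g = κ

/-- `ρ_{κ,s} = |C_{κ,s}|⁻¹ Σ_{g ∈ C_{κ,s}} ⊗_{k=1}^n ρ_{b̄[k]}^{g[k]}`. -/
noncomputable def rhoKS {D m r n : ℕ} (ρ : ZMod 2 → ZMod 2 → Matrix (Fin D) (Fin D) ℂ)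
    (b : Fin n → ZMod 2) (K : Matrix (Fin m) (Fin n) (ZMod 2))
    (F : Matrix (Fin r) (Fin n) (ZMod 2)) (κ : Fin m → ZMod 2) (s : Fin r → ZMod 2) :
    Matrix (Fin n → Fin D) (Fin n → Fin D) ℂ :=
  (((Cset K F κ s).card : ℂ))⁻¹ • ∑ g ∈ Cset K F κ s, tpow (fun k => ρ (b k + 1) (g k))

/-!
Sandwiching `ρ^g` between `P̃^a` and `P̃^{a'}` gives `(-1)^{(a - a') g}` times the sandwich of
`ρ^0`, so with `e = k - l` the sandwiched `ρ_{κ,s}` is a fixed matrix times the average of the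
character `g ↦ (-1)^{e ⬝ g}` over `C_{κ,s}`, a coset of `ker G`. If `e` is not orthogonal to
`ker G`, translating by a kernel vector shows that this average vanishes. Otherwise `e = v G`, and
`|e| = d(k, l) < d_w` forces `v` to vanish on the rows of `K`, so `e ⬝ g = v_F ⬝ s` is constant
on `C_{κ,s}` and the average does not depend on `κ`.
-/

namespace Matrix

variable {K m n : Type*} [Field K] [Fintype m] [Fintype n]

theorem mulVec_surjective_of_linearIndependent_row {A : Matrix m n K}
    (h : LinearIndependent K A.row) : Function.Surjective A.mulVec :=
  LinearMap.range_eq_top.1 <| Submodule.eq_top_of_finrank_eq <|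
    h.rank_matrix.trans (Module.finrank_fintype_fun_eq_card K).symm

theorem exists_eq_vecMul_of_dotProduct_eq_zero {A : Matrix m n K} {e : n → K}
    (h : ∀ x, A *ᵥ x = 0 → e ⬝ᵥ x = 0) : ∃ v, e = v ᵥ* A := by
  have he : dotProductEquiv K n e ∈ (LinearMap.ker A.mulVecLin).dualAnnihilator :=
    (Submodule.mem_dualAnnihilator _).2 fun x hx => h x hx
  rw [← LinearMap.range_dualMap_eq_dualAnnihilator_ker] at he
  obtain ⟨ψ, hψ⟩ := he
  obtain ⟨v, rfl⟩ := (dotProductEquiv K m).surjective ψ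
  refine ⟨v, (dotProductEquiv K n).injective (LinearMap.ext fun x => ?_)⟩
  calc e ⬝ᵥ x = v ⬝ᵥ (A *ᵥ x) := (LinearMap.congr_fun hψ x).symm
    _ = (v ᵥ* A) ⬝ᵥ x := dotProduct_mulVec v A x

end Matrix

namespace AddChar

theorem map_sum_eq_prod {A M ι : Type*} [AddCommMonoid A] [CommMonoid M] (ψ : AddChar A M)
    (s : Finset ι) (f : ι → A) : ψ (∑ i ∈ s, f i) = ∏ i ∈ s, ψ (f i) := by
  induction s using Finset.induction_on with
  | empty => simp
  | insert i s hi ih => rw [Finset.sum_insert hi, Finset.prod_insert hi, map_add_eq_mul, ih]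

theorem sum_eq_zero_of_add_mem_iff {G R : Type*} [AddGroup G] [CommRing R] [IsDomain R]
    (ψ : AddChar G R) {C : Finset G} {h : G} (hψ : ψ h ≠ 1) (hC : ∀ g, g + h ∈ C ↔ g ∈ C) :
    ∑ g ∈ C, ψ g = 0 := by
  have htrans : ψ h * ∑ g ∈ C, ψ g = ∑ g ∈ C, ψ g := by
    rw [Finset.mul_sum]
    exact Finset.sum_equiv (Equiv.addRight h) (fun g => (hC g).symm)
      fun g _ => by rw [Equiv.coe_addRight, map_add_eq_mul, mul_comm]
  have : (ψ h - 1) * ∑ g ∈ C, ψ g = 0 := by rw [sub_mul, htrans, one_mul, sub_self]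
  exact (mul_eq_zero.1 this).resolve_left (sub_ne_zero.2 hψ)

end AddChar

theorem ZMod.eq_zero_or_eq_one (a : ZMod 2) : a = 0 ∨ a = 1 := by
  revert a
  decide

noncomputable def signChar : AddChar (ZMod 2) ℂ where
  toFun a := if a = 0 then 1 else -1
  map_zero_eq_one' := if_pos rfl
  map_add_eq_mul' a b := by
    rcases ZMod.eq_zero_or_eq_one a with rfl | rfl <;>
      rcases ZMod.eq_zero_or_eq_one b with rfl | rfl <;>
      simp [show (1 + 1 : ZMod 2) = 0 from rfl]

theorem signChar_one : signChar 1 = -1 := by simp [signChar]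

theorem sandwich_eq_signChar_smul {A : Type*} [Ring A] [Module ℂ A] (P σ : ZMod 2 → A)
    (hsame : ∀ a, P a * σ 0 * P a = P a * σ 1 * P a)
    (hflip : ∀ a, P a * σ 0 * P (a + 1) = -(P a * σ 1 * P (a + 1))) (a a' g : ZMod 2) :
    P a * σ g * P a' = signChar ((a - a') * g) • (P a * σ 0 * P a') := by
  rcases ZMod.eq_zero_or_eq_one g with rfl | rfl
  · simp
  obtain rfl | rfl : a' = a ∨ a' = a + 1 := by revert a a'; decide
  · simp [hsame]
  · simp [hflip, signChar_one, sub_add_cancel_left, ZMod.neg_eq_self_mod_two]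

section TensorPower

variable {D n : ℕ}

theorem tpow_mul (A B : Fin n → Matrix (Fin D) (Fin D) ℂ) :
    tpow A * tpow B = tpow (fun i => A i * B i) := by
  ext x y
  simp only [tpow, mul_apply, of_apply, ← Finset.prod_mul_distrib]
  rw [Finset.prod_univ_sum, Fintype.piFinset_univ]

theorem tpow_smul (c : Fin n → ℂ) (M : Fin n → Matrix (Fin D) (Fin D) ℂ) :
    tpow (fun i => c i • M i) = (∏ i, c i) • tpow M := by
  ext x y
  simp [tpow, Finset.prod_mul_distrib]

theorem tpow_mul_tpow_mul_tpow (P σ : Fin n → ZMod 2 → Matrix (Fin D) (Fin D) ℂ)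
    (hsame : ∀ i a, P i a * σ i 0 * P i a = P i a * σ i 1 * P i a)
    (hflip : ∀ i a, P i a * σ i 0 * P i (a + 1) = -(P i a * σ i 1 * P i (a + 1)))
    (k l g : Fin n → ZMod 2) :
    tpow (fun i => P i (k i)) * tpow (fun i => σ i (g i)) * tpow (fun i => P i (l i)) =
      signChar ((k - l) ⬝ᵥ g) • tpow (fun i => P i (k i) * σ i 0 * P i (l i)) := by
  rw [tpow_mul, tpow_mul, dotProduct, AddChar.map_sum_eq_prod, ← tpow_smul]
  congr 1
  funext i
  exact sandwich_eq_signChar_smul (P i) (σ i) (hsame i) (hflip i) (k i) (l i) (g i)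

end TensorPower

noncomputable def charAverage {n : ℕ} (C : Finset (Fin n → ZMod 2)) (e : Fin n → ZMod 2) : ℂ :=
  (C.card : ℂ)⁻¹ * ∑ g ∈ C, signChar (e ⬝ᵥ g)

theorem tpow_mul_rhoKS_mul_tpow {D m r n : ℕ} (ρ Pt : ZMod 2 → ZMod 2 → Matrix (Fin D) (Fin D) ℂ)
    (hsame : ∀ a b : ZMod 2,
      Pt b a * ρ (b + 1) 0 * Pt b a = Pt b a * ρ (b + 1) 1 * Pt b a)
    (hflip : ∀ a b : ZMod 2,
      Pt b a * ρ (b + 1) 0 * Pt b (a + 1) = -(Pt b a * ρ (b + 1) 1 * Pt b (a + 1)))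
    (b : Fin n → ZMod 2) (K : Matrix (Fin m) (Fin n) (ZMod 2))
    (F : Matrix (Fin r) (Fin n) (ZMod 2)) (κ : Fin m → ZMod 2) (s : Fin r → ZMod 2)
    (k l : Fin n → ZMod 2) :
    tpow (fun i => Pt (b i) (k i)) * rhoKS ρ b K F κ s * tpow (fun i => Pt (b i) (l i)) =
      charAverage (Cset K F κ s) (k - l) •
        tpow (fun i => Pt (b i) (k i) * ρ (b i + 1) 0 * Pt (b i) (l i)) := by
  have hterm := tpow_mul_tpow_mul_tpow (fun i => Pt (b i)) (fun i => ρ (b i + 1))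
    (fun i a => hsame a (b i)) (fun i a => hflip a (b i)) k l
  rw [rhoKS, Matrix.mul_smul, Matrix.smul_mul, Finset.mul_sum, Finset.sum_mul, charAverage,
    ← smul_smul, Finset.sum_smul]
  simp only [hterm]

section Code

variable {m r n : ℕ} {K : Matrix (Fin m) (Fin n) (ZMod 2)} {F : Matrix (Fin r) (Fin n) (ZMod 2)}

theorem mem_Cset_iff {κ : Fin m → ZMod 2} {s : Fin r → ZMod 2} {g : Fin n → ZMod 2} :
    g ∈ Cset K F κ s ↔ fromRows K F *ᵥ g = Sum.elim κ s := by
  simp [Cset, fromRows_mulVec, funext_iff, and_comm]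

theorem Cset_nonempty (hG : LinearIndependent (ZMod 2) (fun i => fromRows K F i))
    (κ : Fin m → ZMod 2) (s : Fin r → ZMod 2) : (Cset K F κ s).Nonempty :=
  let ⟨g, hg⟩ := mulVec_surjective_of_linearIndependent_row hG (Sum.elim κ s)
  ⟨g, mem_Cset_iff.2 hg⟩

theorem add_mem_Cset_iff {κ : Fin m → ZMod 2} {s : Fin r → ZMod 2} {g h : Fin n → ZMod 2}
    (hh : fromRows K F *ᵥ h = 0) : g + h ∈ Cset K F κ s ↔ g ∈ Cset K F κ s := by
  rw [mem_Cset_iff, mem_Cset_iff, mulVec_add, hh, add_zero]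

theorem charAverage_Cset_eq_zero {κ : Fin m → ZMod 2} {s : Fin r → ZMod 2}
    {e h : Fin n → ZMod 2} (hh : fromRows K F *ᵥ h = 0) (heh : e ⬝ᵥ h = 1) :
    charAverage (Cset K F κ s) e = 0 := by
  let χ : AddChar (Fin n → ZMod 2) ℂ :=
    signChar.compAddMonoidHom (AddMonoidHom.mk' (e ⬝ᵥ ·) (dotProduct_add e))
  have hχ : χ h ≠ 1 := by
    simp [χ, heh, signChar_one, (by norm_num : (-1 : ℂ) ≠ 1)]
  exact mul_eq_zero_of_right _ (χ.sum_eq_zero_of_add_mem_iff hχ fun _ => add_mem_Cset_iff hh)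

theorem charAverage_Cset_of_eq_vecMul (hG : LinearIndependent (ZMod 2) (fun i => fromRows K F i))
    {v : Fin m ⊕ Fin r → ZMod 2} (hv : ∀ i, v (Sum.inl i) = 0)
    (κ : Fin m → ZMod 2) (s : Fin r → ZMod 2) :
    charAverage (Cset K F κ s) (v ᵥ* fromRows K F) = signChar ((v ∘ Sum.inr) ⬝ᵥ s) := by
  have hconst : ∀ g ∈ Cset K F κ s, (v ᵥ* fromRows K F) ⬝ᵥ g = (v ∘ Sum.inr) ⬝ᵥ s := by
    intro g hg
    rw [← dotProduct_mulVec, mem_Cset_iff.1 hg, ← Sum.elim_comp_inl_inr v,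
      sumElim_dotProduct_sumElim, Sum.elim_comp_inr, show v ∘ Sum.inl = 0 from funext hv,
      zero_dotProduct, zero_add]
  have hcard : ((Cset K F κ s).card : ℂ) ≠ 0 :=
    Nat.cast_ne_zero.2 (Cset_nonempty hG κ s).card_pos.ne'
  rw [charAverage, Finset.sum_congr rfl fun g hg => by rw [hconst g hg], Finset.sum_const,
    nsmul_eq_mul, inv_mul_cancel_left₀ hcard]

theorem eq_zero_of_hammingNorm_vecMul_lt {dw : ℕ}
    (hdw : IsLeast {w : ℕ | ∃ v : Fin m ⊕ Fin r → ZMod 2,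
      (∃ i : Fin m, v (Sum.inl i) ≠ 0) ∧ hammingNorm (v ᵥ* fromRows K F) = w} dw)
    {v : Fin m ⊕ Fin r → ZMod 2} (hv : hammingNorm (v ᵥ* fromRows K F) < dw) (i : Fin m) :
    v (Sum.inl i) = 0 := by
  by_contra hi
  exact (hdw.2 ⟨v, ⟨i, hi⟩, rfl⟩).not_gt hv

theorem charAverage_Cset_eq (hG : LinearIndependent (ZMod 2) (fun i => fromRows K F i))
    {dw : ℕ} (hdw : IsLeast {w : ℕ | ∃ v : Fin m ⊕ Fin r → ZMod 2,
      (∃ i : Fin m, v (Sum.inl i) ≠ 0) ∧ hammingNorm (v ᵥ* fromRows K F) = w} dw)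
    {e : Fin n → ZMod 2} (he : hammingNorm e < dw) (κ κ' : Fin m → ZMod 2) (s : Fin r → ZMod 2) :
    charAverage (Cset K F κ s) e = charAverage (Cset K F κ' s) e := by
  by_cases hker : ∀ h, fromRows K F *ᵥ h = 0 → e ⬝ᵥ h = 0
  · obtain ⟨v, rfl⟩ := exists_eq_vecMul_of_dotProduct_eq_zero hker
    have hv := eq_zero_of_hammingNorm_vecMul_lt hdw he
    rw [charAverage_Cset_of_eq_vecMul hG hv, charAverage_Cset_of_eq_vecMul hG hv]
  · push Not at hker
    obtain ⟨h, hh, heh⟩ := hker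
    have heh : e ⬝ᵥ h = 1 := (ZMod.eq_zero_or_eq_one _).resolve_left heh
    rw [charAverage_Cset_eq_zero hh heh, charAverage_Cset_eq_zero hh heh]

end Code

theorem stmt9_general (D n m r : ℕ)
    (ρ Pt : ZMod 2 → ZMod 2 → Matrix (Fin D) (Fin D) ℂ)
    (hPt2 : ∀ a b : ZMod 2,
      Pt b a * ρ (b + 1) 0 * Pt b a = Pt b a * ρ (b + 1) 1 * Pt b a)
    (hPt3 : ∀ a b : ZMod 2,
      Pt b a * ρ (b + 1) 0 * Pt b (a + 1) = -(Pt b a * ρ (b + 1) 1 * Pt b (a + 1)))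
    (K : Matrix (Fin m) (Fin n) (ZMod 2)) (F : Matrix (Fin r) (Fin n) (ZMod 2))
    (hG : LinearIndependent (ZMod 2) (fun i => Matrix.fromRows K F i))
    (dw : ℕ)
    (hdw : IsLeast {w : ℕ | ∃ v : Fin m ⊕ Fin r → ZMod 2,
        (∃ i : Fin m, v (Sum.inl i) ≠ 0) ∧ hammingNorm (v ᵥ* Matrix.fromRows K F) = w} dw)
    (b : Fin n → ZMod 2)
    (κ κ' : Fin m → ZMod 2) (s : Fin r → ZMod 2)
    (k l : Fin n → ZMod 2) (hkl : hammingDist k l < dw) :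
    tpow (fun i => Pt (b i) (k i)) *
        (rhoKS ρ b K F κ s - rhoKS ρ b K F κ' s) *
        tpow (fun i => Pt (b i) (l i)) = 0 := by
  rw [hammingDist_comm, hammingDist_eq_hammingNorm, neg_add_eq_sub] at hkl
  rw [mul_sub, sub_mul, tpow_mul_rhoKS_mul_tpow ρ Pt hPt2 hPt3,
    tpow_mul_rhoKS_mul_tpow ρ Pt hPt2 hPt3, charAverage_Cset_eq hG hdw hkl κ κ' s, sub_self]

/-- under the quasiperfect-source identities, for all keys `κ, κ′`,
syndromes `s`, and strings `k, l` with `d(k,l) < d_w`: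
`(⊗ᵢ P̃_{b[i]}^{k[i]}) (ρ_{κ,s} − ρ_{κ′,s}) (⊗ᵢ P̃_{b[i]}^{l[i]}) = 0`. -/
theorem stmt9 (D n m r : ℕ) (hD : 1 ≤ D) (hmrn : r + m ≤ n)
    (ρ Pt : ZMod 2 → ZMod 2 → Matrix (Fin D) (Fin D) ℂ)
    (hρ : ∀ b g, (ρ b g).PosSemidef ∧ (ρ b g).trace = 1)
    (hPt1 : ∀ b : ZMod 2, Pt b 0 + Pt b 1 = 1)
    (hPt2 : ∀ a b : ZMod 2,
      Pt b a * ρ (b + 1) 0 * Pt b a = Pt b a * ρ (b + 1) 1 * Pt b a)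
    (hPt3 : ∀ a b : ZMod 2,
      Pt b a * ρ (b + 1) 0 * Pt b (a + 1) = -(Pt b a * ρ (b + 1) 1 * Pt b (a + 1)))
    (K : Matrix (Fin m) (Fin n) (ZMod 2)) (F : Matrix (Fin r) (Fin n) (ZMod 2))
    (hG : LinearIndependent (ZMod 2) (fun i => Matrix.fromRows K F i))
    (dw : ℕ)
    (hdw : IsLeast {w : ℕ | ∃ v : Fin m ⊕ Fin r → ZMod 2,
        (∃ i : Fin m, v (Sum.inl i) ≠ 0) ∧ hammingNorm (v ᵥ* Matrix.fromRows K F) = w} dw)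
    (b : Fin n → ZMod 2)
    (κ κ' : Fin m → ZMod 2) (s : Fin r → ZMod 2)
    (k l : Fin n → ZMod 2) (hkl : hammingDist k l < dw) :
    tpow (fun i => Pt (b i) (k i)) *
        (rhoKS ρ b K F κ s - rhoKS ρ b K F κ' s) *
        tpow (fun i => Pt (b i) (l i)) = 0 :=
  stmt9_general D n m r ρ Pt hPt2 hPt3 K F hG dw hdw b κ κ' s k l hkl
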